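/- The per-value decomposition of SPP semantics holds: for an SPP s = SPP(f, b, m, d), a value v, and a packet π, the output set ⟦s⟧(π[f←v]) equals the union over all bindings (vᵢ ↦ pᵢ) in the map s(v) of ⟦pᵢ⟧(π[f←vᵢ]), where s(v) is defined as b(v) if v ∈ dom(b), and otherwise as m if v ∈ dom(m) or d = ⊥, and as m ∪ {v ↦ d} otherwise. -/

import Mathlib

/-!
Statement 15: per-value decomposition of SPP semantics: for
`s = SPP(f, b, m, d)`, a value `v` and a packet `π`, the output set
`⟦s⟧(π[f←v])` equals the union over all bindings `vᵢ ↦ pᵢ` of the map `s(v)`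
of `⟦pᵢ⟧(π[f←vᵢ])`, where `s(v) = b(v)` if `v ∈ dom(b)`, else `m` if
`v ∈ dom(m)` or `d = ⊥`, and `m ∪ {v ↦ d}` otherwise.
-/

/-- Symbolic packet programs: `s ::= ⊥ | ⊤ | SPP(f, b, m, d)` where `b` maps
test values to assignment maps, `m` is the default assignment map, and `d` is
the default-identity continuation. -/
inductive SPP (F V : Type) : Type where
  | bot : SPP F V
  | top : SPP F V
  | node : F → List (V × List (V × SPP F V)) → List (V × SPP F V) → SPP F V → SPP F V

/-- Association-list lookup (first binding wins). -/
def alook {α β : Type _} [DecidableEq α] : List (α × β) → α → Option β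
  | [], _ => none
  | q :: rest, v => if q.1 = v then some q.2 else alook rest v

theorem alook_mem {α β : Type _} [DecidableEq α] {l : List (α × β)} {v : α} {x : β}
    (h : alook l v = some x) : ∃ k, (k, x) ∈ l := by
  induction l with
  | nil => simp [alook] at h
  | cons q rest ih =>
    simp only [alook] at h
    split at h
    · obtain ⟨a, c⟩ := q
      exact ⟨a, by simp_all⟩
    · obtain ⟨k, hk⟩ := ih h
      exact ⟨k, List.mem_cons_of_mem _ hk⟩

namespace SPP

theorem sizeOf_snd_lt_of_mem {V β : Type} [SizeOf β] {b : List (V × β)}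
    {q : V × β} (h : q ∈ b) : sizeOf q.2 < sizeOf b := by
  have h1 := List.sizeOf_lt_of_mem h
  obtain ⟨a, c⟩ := q
  simp at h1 ⊢
  omega

variable {F V : Type} [DecidableEq F] [DecidableEq V]

/-- The output relation of an SPP: `osem s π π'` holds when running `s` on
input packet `π` can produce output packet `π'`. -/
def osem (s : SPP F V) (π π' : F → V) : Prop :=
  match s with
  | .bot => False
  | .top => π' = π
  | .node f b m d =>
    match h : alook b (π f) with
    | some mb =>
        ∃ wq : { x // x ∈ mb }, osem wq.1.2 (Function.update π f wq.1.1) π'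
    | none =>
        (∃ wq : { x // x ∈ m }, osem wq.1.2 (Function.update π f wq.1.1) π')
        ∨ (alook m (π f) = none ∧ osem d π π')
termination_by sizeOf s
decreasing_by
  · obtain ⟨k, hk⟩ := alook_mem h
    have h1 : sizeOf mb < sizeOf b := by
      have := List.sizeOf_lt_of_mem hk
      simp at this; omega
    have h2 := sizeOf_snd_lt_of_mem wq.2
    simp only [SPP.node.sizeOf_spec]
    omega
  · have h2 := sizeOf_snd_lt_of_mem wq.2
    simp only [SPP.node.sizeOf_spec]
    omega
  · simp only [SPP.node.sizeOf_spec]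
    omega

end SPP

namespace SPP

variable {F V : Type} [DecidableEq F] [DecidableEq V]

def isBot : SPP F V → Bool
  | .bot => true
  | _ => false

/-- The "get" map `s(v)` of an SPP node, packaging the case analysis on the
input value `v` of the tested field. -/
def sget (b : List (V × List (V × SPP F V))) (m : List (V × SPP F V))
    (d : SPP F V) (v : V) : List (V × SPP F V) :=
  match alook b v with
  | some mb => mb
  | none => if (alook m v).isSome || isBot d then m else (v, d) :: m

end SPP

theorem spp_get_decomposition {F V : Type} [DecidableEq F] [DecidableEq V]
    (f : F) (b : List (V × List (V × SPP F V))) (m : List (V × SPP F V))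
    (d : SPP F V) (v : V) (π π' : F → V) :
    SPP.osem (SPP.node f b m d) (Function.update π f v) π' ↔
      ∃ wq ∈ SPP.sget b m d v,
        SPP.osem wq.2 (Function.update π f wq.1) π' := by
  have hv : Function.update π f v f = v := Function.update_self f v π
  rw [SPP.osem]
  simp only [hv]
  split
  next mb heq =>
    rw [hv] at heq
    simp only [SPP.sget, heq]
    constructor
    · rintro ⟨⟨wq, hwq⟩, h⟩
      exact ⟨wq, hwq, by rwa [Function.update_idem] at h⟩
    · rintro ⟨wq, hwq, h⟩
      exact ⟨⟨wq, hwq⟩, by rwa [Function.update_idem]⟩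
  next heq =>
    rw [hv] at heq
    simp only [SPP.sget, heq]
    cases hm : alook m v with
    | some x =>
      simp only [hm, Option.isSome_some, Bool.true_or, if_true]
      constructor
      · rintro (⟨⟨wq, hwq⟩, h⟩ | ⟨hc, _⟩)
        · exact ⟨wq, hwq, by rwa [Function.update_idem] at h⟩
        · simp [hm] at hc
      · rintro ⟨wq, hwq, h⟩
        exact Or.inl ⟨⟨wq, hwq⟩, by rwa [Function.update_idem]⟩
    | none =>
      simp only [hm, Option.isSome_none, Bool.false_or]
      cases hd : SPP.isBot d with
      | true =>
        simp only [if_true]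
        have hdb : d = SPP.bot := by cases d <;> simp [SPP.isBot] at hd ⊢
        subst hdb
        constructor
        · rintro (⟨⟨wq, hwq⟩, h⟩ | ⟨_, hdd⟩)
          · exact ⟨wq, hwq, by rwa [Function.update_idem] at h⟩
          · exact absurd hdd (by rw [SPP.osem]; exact id)
        · rintro ⟨wq, hwq, h⟩
          exact Or.inl ⟨⟨wq, hwq⟩, by rwa [Function.update_idem]⟩
      | false =>
        simp only [Bool.false_eq_true, if_false]
        constructor
        · rintro (⟨⟨wq, hwq⟩, h⟩ | ⟨_, hdd⟩)
          · exact ⟨wq, List.mem_cons_of_mem _ hwq, by rwa [Function.update_idem] at h⟩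
          · exact ⟨(v, d), List.mem_cons_self, hdd⟩
        · rintro ⟨wq, hwq, h⟩
          rcases List.mem_cons.1 hwq with h1 | h1
          · subst h1; exact Or.inr ⟨trivial, h⟩
          · exact Or.inl ⟨⟨wq, h1⟩, by rwa [Function.update_idem]⟩
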